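/- For Re(q) sufficiently large, |z| < 1, and x in the disk |x-1/2| < 1/2, the operator Q_{q,z} defined by Q_{q,z} B_q[φ](x) = z ∫₀^∞ e^(-t(x+1)) t^(2q-1) (1 - z e^(-t))^(-1) φ(t) dt admits the series expansion Q_{q,z} g(x) = Σ_{n≥1} z^n (x+n)^(-2q) g(1/(x+n)), where g = B_q[φ]. -/

import Mathlib

open MeasureTheory

noncomputable def Bq' (q : ℂ) (φ : ℝ → ℂ) (x : ℂ) : ℂ :=
  x ^ (-2 * q) * ∫ t in Set.Ioi (0:ℝ),
    Complex.exp (-(t:ℂ) / x) * φ t * (t:ℂ) ^ (2 * q - 1)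

/-!
Expanding `(1 - z e^{-t})⁻¹` as a geometric series, which is dominated by
`∑ ‖z‖ⁿ` because `|e^{-t}| ≤ 1`, the series may be integrated term by term. The
`n`-th term is a Laplace-type integral at `w = x + n + 1`, and since `w` has positive
real part, `(1/w)^(-2q) = (w^(-2q))⁻¹`, which identifies it with
`w^(-2q) · B_q[φ](1/w)`.
-/

theorem hasSum_integral_geometric {α : Type*} [MeasurableSpace α] {μ : Measure α}
    {u f : α → ℂ} (hu : AEStronglyMeasurable u μ) (hu_le : ∀ᵐ a ∂μ, ‖u a‖ ≤ 1)
    (hf : Integrable f μ) {z : ℂ} (hz : ‖z‖ < 1) :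
    HasSum (fun n : ℕ => z ^ n * ∫ a, u a ^ n * f a ∂μ)
      (∫ a, (1 - z * u a)⁻¹ * f a ∂μ) := by
  set F : ℕ → α → ℂ := fun n a => (z * u a) ^ n * f a
  have hF_le : ∀ n, ∀ᵐ a ∂μ, ‖F n a‖ ≤ ‖z‖ ^ n * ‖f a‖ := fun n => by
    filter_upwards [hu_le] with a ha
    simp only [F, norm_mul, norm_pow]
    gcongr
    exact mul_le_of_le_one_right (norm_nonneg z) ha
  have hF_int : ∀ n, Integrable (F n) μ := fun n =>
    (hf.norm.const_mul _).mono' (((hu.const_mul z).pow n).mul hf.1) (hF_le n)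
  have hF_sum : Summable fun n => ∫ a, ‖F n a‖ ∂μ := by
    refine Summable.of_nonneg_of_le (fun n => integral_nonneg fun a => norm_nonneg _)
      (fun n => ?_) ((summable_geometric_of_lt_one (norm_nonneg z) hz).mul_right
        (∫ a, ‖f a‖ ∂μ))
    rw [← integral_const_mul]
    exact integral_mono_ae (hF_int n).norm (hf.norm.const_mul _) (hF_le n)
  have h_tsum : ∀ᵐ a ∂μ, ∑' n, F n a = (1 - z * u a)⁻¹ * f a := by
    filter_upwards [hu_le] with a ha
    have hzu : ‖z * u a‖ < 1 := by
      rw [norm_mul]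
      exact (mul_le_of_le_one_right (norm_nonneg z) ha).trans_lt hz
    rw [tsum_mul_right, tsum_geometric_of_norm_lt_one hzu]
  have h := hasSum_integral_of_summable_integral_norm hF_int hF_sum
  rw [integral_congr_ae h_tsum] at h
  simpa only [F, mul_pow, mul_assoc, integral_const_mul] using h

theorem norm_cexp_neg_mul_le_one {t : ℝ} (ht : 0 ≤ t) {w : ℂ} (hw : 0 ≤ w.re) :
    ‖Complex.exp (-(t : ℂ) * w)‖ ≤ 1 := by
  rw [Complex.norm_exp, Real.exp_le_one_iff]
  simpa [Complex.mul_re] using mul_nonneg ht hw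

theorem integrableOn_cexp_neg_mul {h : ℝ → ℂ} (hh : IntegrableOn h (Set.Ioi 0)) {w : ℂ}
    (hw : 0 ≤ w.re) :
    IntegrableOn (fun t : ℝ => Complex.exp (-(t : ℂ) * w) * h t) (Set.Ioi 0) := by
  refine hh.bdd_mul (c := 1) (by fun_prop) ?_
  filter_upwards [ae_restrict_mem measurableSet_Ioi] with t ht
  exact norm_cexp_neg_mul_le_one (le_of_lt ht) hw

theorem cpow_mul_Bq'_one_div (q : ℂ) (φ : ℝ → ℂ) {w : ℂ} (hw : w ∈ Complex.slitPlane) :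
    w ^ (-2 * q) * Bq' q φ (1 / w) =
      ∫ t in Set.Ioi (0 : ℝ), Complex.exp (-(t : ℂ) * w) * φ t * (t : ℂ) ^ (2 * q - 1) := by
  have hw_pow : w ^ (-2 * q) ≠ 0 :=
    Complex.cpow_ne_zero_iff.2 (Or.inl (Complex.slitPlane_ne_zero hw))
  rw [Bq', one_div, Complex.inv_cpow _ _ (Complex.slitPlane_arg_ne_pi hw), ← mul_assoc,
    mul_inv_cancel₀ hw_pow, one_mul]
  simp only [div_inv_eq_mul]

theorem integral_cexp_neg_pow_mul_eq_cpow_mul_Bq' (q : ℂ) (φ : ℝ → ℂ) {x : ℂ} (hx : 0 ≤ x.re)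
    (n : ℕ) :
    ∫ t in Set.Ioi (0 : ℝ), Complex.exp (-(t : ℂ)) ^ n *
        (Complex.exp (-(t : ℂ) * (x + 1)) * ((t : ℂ) ^ (2 * q - 1) * φ t)) =
      (x + (n + 1 : ℕ)) ^ (-2 * q) * Bq' q φ (1 / (x + (n + 1 : ℕ))) := by
  have hw : x + ((n + 1 : ℕ) : ℂ) ∈ Complex.slitPlane :=
    Complex.mem_slitPlane_iff.2 (Or.inl (by
      simp only [Nat.cast_add, Nat.cast_one, Complex.add_re, Complex.natCast_re, Complex.one_re]
      positivity))
  rw [cpow_mul_Bq'_one_div q φ hw]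
  refine integral_congr_ae (Filter.Eventually.of_forall fun t => ?_)
  simp only [← Complex.exp_nat_mul, ← mul_assoc, ← Complex.exp_add]
  push_cast
  ring_nf

theorem re_pos_of_norm_sub_half_lt {x : ℂ} (hx : ‖x - 1 / 2‖ < 1 / 2) : 0 < x.re := by
  have h := (Complex.abs_re_le_norm (x - 1 / 2)).trans_lt hx
  rw [Complex.sub_re] at h
  norm_num at h
  linarith [(abs_lt.mp h).1]

theorem Qqz_series_expansion :
    ∃ q₀ : ℝ, ∀ q : ℂ, q₀ ≤ q.re → ∀ z : ℂ, ‖z‖ < 1 →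
      ∀ φ : ℝ → ℂ,
        IntegrableOn (fun t : ℝ => φ t * (t:ℂ) ^ (2 * q - 1) * (Real.exp (-t) : ℂ))
          (Set.Ioi 0) →
      ∀ x : ℂ, ‖x - 1/2‖ < 1/2 →
        z * ∫ t in Set.Ioi (0:ℝ),
            Complex.exp (-(t:ℂ) * (x + 1)) * (t:ℂ) ^ (2 * q - 1) *
              (1 - z * Complex.exp (-(t:ℂ)))⁻¹ * φ t
          = ∑' n : ℕ, z ^ (n + 1) * (x + (n + 1 : ℕ)) ^ (-2 * q) *
              Bq' q φ (1 / (x + (n + 1 : ℕ))) := by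
  refine ⟨0, fun q _ z hz φ hφ x hx => ?_⟩
  have hx_re := re_pos_of_norm_sub_half_lt hx
  have hf : IntegrableOn (fun t : ℝ => Complex.exp (-(t : ℂ) * (x + 1)) *
      ((t : ℂ) ^ (2 * q - 1) * φ t)) (Set.Ioi 0) := by
    refine (integrableOn_cexp_neg_mul hφ hx_re.le).congr_fun (fun t _ => ?_) measurableSet_Ioi
    simp only [Complex.ofReal_exp, Complex.ofReal_neg]
    rw [mul_add, mul_one, Complex.exp_add]
    ring
  have hS := hasSum_integral_geometric (u := fun t : ℝ => Complex.exp (-(t : ℂ)))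
    (by fun_prop) (ae_restrict_of_forall_mem measurableSet_Ioi fun t ht => by
      simpa using norm_cexp_neg_mul_le_one (w := 1) (le_of_lt ht) zero_le_one) hf hz
  have h_integrand : ∀ t : ℝ, Complex.exp (-(t : ℂ) * (x + 1)) * (t : ℂ) ^ (2 * q - 1) *
      (1 - z * Complex.exp (-(t : ℂ)))⁻¹ * φ t = (1 - z * Complex.exp (-(t : ℂ)))⁻¹ *
      (Complex.exp (-(t : ℂ) * (x + 1)) * ((t : ℂ) ^ (2 * q - 1) * φ t)) := fun t => by ring
  simp only [h_integrand, ← (hS.mul_left z).tsum_eq]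
  refine tsum_congr fun n => ?_
  rw [integral_cexp_neg_pow_mul_eq_cpow_mul_Bq' q φ hx_re.le n, pow_succ']
  ring
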